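/- arXiv:1803.00273 — 5 statements merged into one kernel-verified Lean document; each statement's English description precedes it below -/
import Mathlib

section
/- Let T be an invertible n×n subgenerator with t = -T·1 and α a probability row vector, and suppose ν = -α T⁻¹ has strictly positive entries. Then ν, normalized, is a stationary distribution of the generator T + t α; i.e., ν (T + t α) = 0. -/
open Matrix

/-- `ν = -α T⁻¹` (normalized) is stationary for the generator `T + t α`:
`ν (T + t α) = 0`. -/
theorem nu_stationary {n : ℕ} (T : Matrix (Fin n) (Fin n) ℝ)
    (hT : IsUnit T)
    (hoff : ∀ i j, i ≠ j → 0 ≤ T i j)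
    (hrow : ∀ i, ∑ j, T i j ≤ 0)
    (α : Fin n → ℝ) (hα : ∀ i, 0 ≤ α i) (hα1 : ∑ i, α i = 1)
    (t : Fin n → ℝ) (ht : t = fun i => -(∑ j, T i j))
    (ν : Fin n → ℝ) (hν : ν = -(α ᵥ* T⁻¹)) (hνpos : ∀ i, 0 < ν i) :
    ν ᵥ* (T + Matrix.vecMulVec t α) = 0 := by
  have hνT : ν ᵥ* T = -α := by
    subst hν
    have := Matrix.vecMul_vecMul α T⁻¹ T
    rw [Matrix.nonsing_inv_mul T (((Matrix.isUnit_iff_isUnit_det T).mp hT))] at this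
    simp [Matrix.neg_vecMul, this]
  have hνt : ν ⬝ᵥ t = 1 := by
    subst ht
    have : ν ⬝ᵥ (fun i => -(∑ j, T i j)) = -∑ i, ∑ j, ν i * T i j := by
      simp [dotProduct, Finset.mul_sum, Finset.sum_neg_distrib]
    rw [this, Finset.sum_comm]
    have : ∑ j, ∑ i, ν i * T i j = ∑ j, (-α) j := by
      refine Finset.sum_congr rfl fun j _ => ?_
      have := congrFun hνT j
      simpa [Matrix.vecMul, dotProduct] using this
    rw [this]
    simp [hα1]
  funext j
  simp only [Matrix.vecMul_add, Pi.add_apply, Pi.zero_apply]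
  have h1 : (ν ᵥ* Matrix.vecMulVec t α) j = (ν ⬝ᵥ t) * α j := by
    simp [Matrix.vecMul, Matrix.vecMulVec, dotProduct, Finset.sum_mul, mul_assoc]
  rw [h1, hνt, congrFun hνT j]
  simp
end

section
/- Suppose the matrix T + Δ_t is irreducible with stationary distribution π (i.e., π(T + Δ_t) = 0, π·1 = 1, π entrywise positive), where T is an invertible subgenerator and t = -T·1. Define α := π Δ_t / (π t). Then ν := -α T⁻¹ is proportional to π, and consequently the time-reversed representation satisfies α* = α and t* = t, where α* = tᵀ Δ_ν and t* = Δ_ν⁻¹ αᵀ. -/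
open Matrix

def MatIrreducible {n : ℕ} (M : Matrix (Fin n) (Fin n) ℝ) : Prop :=
  ∀ i j : Fin n, Relation.ReflTransGen (fun a b => a ≠ b ∧ 0 < M a b) i j

/-- If `T + Δ_t` is irreducible with stationary distribution `π` and
`α = π Δ_t / (π t)`, then `ν = -α T⁻¹` is proportional to `π`, and the
time-reversal satisfies `α* = α` and `t* = t`. -/
theorem fixed_point_reversal {n : ℕ} (T : Matrix (Fin n) (Fin n) ℝ)
    (hT : IsUnit T)
    (hoff : ∀ i j, i ≠ j → 0 ≤ T i j)
    (hrow : ∀ i, ∑ j, T i j ≤ 0)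
    (t : Fin n → ℝ) (ht : t = fun i => -(∑ j, T i j))
    (hirr : MatIrreducible (T + Matrix.diagonal t))
    (π : Fin n → ℝ) (hπ : π ᵥ* (T + Matrix.diagonal t) = 0)
    (hπ1 : ∑ i, π i = 1) (hπpos : ∀ i, 0 < π i)
    (hπt : 0 < π ⬝ᵥ t)
    (α : Fin n → ℝ) (hα : α = fun i => (π ᵥ* Matrix.diagonal t) i / (π ⬝ᵥ t))
    (ν : Fin n → ℝ) (hν : ν = -(α ᵥ* T⁻¹)) :
    (∃ c : ℝ, 0 < c ∧ ν = c • π) ∧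
      t ᵥ* Matrix.diagonal ν = α ∧
      (Matrix.diagonal ν)⁻¹ *ᵥ α = t := by
  have hdet : IsUnit T.det := (Matrix.isUnit_iff_isUnit_det T).mp hT
  have hπT : π ᵥ* T = -(fun i => π i * t i) := by
    have h := hπ
    rw [Matrix.vecMul_add] at h
    funext i
    have h2 := congrFun h i
    simp only [Pi.add_apply, Pi.zero_apply, Matrix.vecMul_diagonal] at h2
    simp only [Pi.neg_apply]
    linarith
  have hα' : α = (π ⬝ᵥ t)⁻¹ • fun i => π i * t i := by
    funext i
    simp [hα, Matrix.vecMul_diagonal, div_eq_inv_mul, mul_comm]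
  have hν' : ν = (π ⬝ᵥ t)⁻¹ • π := by
    rw [hν, hα', Matrix.smul_vecMul]
    have h2 : (fun i => π i * t i) ᵥ* T⁻¹ = -π := by
      have h3 : (fun i => π i * t i : Fin n → ℝ) = -(π ᵥ* T) := by rw [hπT]; simp
      rw [h3, Matrix.neg_vecMul, Matrix.vecMul_vecMul, Matrix.mul_nonsing_inv T hdet,
        Matrix.vecMul_one]
    rw [h2]
    simp
  have hc : 0 < (π ⬝ᵥ t)⁻¹ := inv_pos.mpr hπt
  have hνi : ∀ i, ν i = (π ⬝ᵥ t)⁻¹ * π i := fun i => by rw [hν']; rfl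
  have hνne : ∀ i, ν i ≠ 0 := fun i => by
    rw [hνi]; exact (mul_pos hc (hπpos i)).ne'
  refine ⟨⟨(π ⬝ᵥ t)⁻¹, hc, hν'⟩, ?_, ?_⟩
  · funext i
    rw [Matrix.vecMul_diagonal, hνi, hα]
    simp only [Matrix.vecMul_diagonal]
    field_simp
  · have hdiaginv : (Matrix.diagonal ν)⁻¹ = Matrix.diagonal (fun i => (ν i)⁻¹) := by
      apply Matrix.inv_eq_right_inv
      rw [Matrix.diagonal_mul_diagonal]
      have : (fun i => ν i * (ν i)⁻¹) = fun _ : Fin n => (1:ℝ) := by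
        funext i; exact mul_inv_cancel₀ (hνne i)
      rw [this, Matrix.diagonal_one]
    funext i
    have h1 : π i ≠ 0 := (hπpos i).ne'
    have h2 : (π ⬝ᵥ t) ≠ 0 := hπt.ne'
    rw [hdiaginv, Matrix.mulVec_diagonal, hνi, hα]
    simp only [Matrix.vecMul_diagonal]
    field_simp
end

section
/- Let T be the generalized Coxian subgenerator: T_{ii} = -λ_i, T_{i,i+1} = λ_i(1-p_i) for i < n, with λ_i > 0, p_i ∈ [0,1) for i < n, p_n = 1, and initial vector α = e₁. Then ν = -αT⁻¹ has i-th entry (1/λ_i)·(1-p_1)⋯(1-p_{i-1}), and the time-reversed representation satisfies T*_{ii} = -λ_i, T*_{i,i-1} = λ_i for i > 1, and α*_i = p_i(1-p_{i-1})⋯(1-p_1), t* = λ_1 e₁ᵀ. -/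
open Matrix Finset

/-!
With `P i = ∏_{k<i} (1 - p k)` the probability of ever reaching phase `i`, the vector
`ν i = P i / λ i` solves `ν T = -e₁`: column `i > 0` of this system is the balance
relation `λ_{i-1} (1 - p_{i-1}) ν_{i-1} = P i = λ_i ν_i`. Since all `P i > 0`, the
diagonal matrix `Δ_ν` is invertible and `T*_{ij} = T_{ji} ν_j / ν_i`, so the balance
relation turns the superdiagonal of `T` into the subdiagonal `λ_i` of `T*`. The exit rates
are `t_i = λ_i p_i` (with `p_n = 1` on the last row), hence `α*_i = λ_i p_i ν_i = p_i P_i`.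
-/

namespace Matrix

variable {m K : Type*} [Fintype m] [DecidableEq m] [Field K]

theorem inv_diagonal_of_ne_zero {ν : m → K} (hν : ∀ i, ν i ≠ 0) :
    (diagonal ν)⁻¹ = diagonal ν⁻¹ := by
  refine inv_eq_right_inv ?_
  rw [diagonal_mul_diagonal, ← diagonal_one]
  exact congrArg diagonal (funext fun i => mul_inv_cancel₀ (hν i))

theorem diagonal_inv_mul_transpose_mul_diagonal_apply {ν : m → K} (hν : ∀ i, ν i ≠ 0)
    (T : Matrix m m K) (i j : m) :
    ((diagonal ν)⁻¹ * Tᵀ * diagonal ν) i j = (ν i)⁻¹ * T j i * ν j := by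
  rw [inv_diagonal_of_ne_zero hν, mul_diagonal, diagonal_mul, transpose_apply, Pi.inv_apply]

theorem neg_vecMul_inv_eq_of_vecMul_eq {T : Matrix m m K} (hT : T.det ≠ 0) {w α : m → K}
    (h : w ᵥ* T = -α) : -(α ᵥ* T⁻¹) = w := by
  rw [← neg_vecMul, ← h, vecMul_vecMul, mul_nonsing_inv T (isUnit_iff_ne_zero.mpr hT),
    vecMul_one]

end Matrix

namespace Coxian

variable {n : ℕ} (lam p : Fin n → ℝ)

theorem prod_Iio_of_succ_eq {M : Type*} [CommMonoid M] (f : Fin n → M) {i j : Fin n}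
    (hji : (j : ℕ) + 1 = i) : ∏ k ∈ Iio i, f k = f j * ∏ k ∈ Iio j, f k := by
  have hIio : Iio i = insert j (Iio j) := by
    ext k
    simp only [mem_Iio, mem_insert, Fin.lt_def, Fin.ext_iff]
    omega
  rw [hIio, prod_insert notMem_Iio_self]

def generator : Matrix (Fin n) (Fin n) ℝ :=
  of fun i j : Fin n => if j = i then -lam i
    else if (j : ℕ) = (i : ℕ) + 1 then lam i * (1 - p i) else 0

noncomputable def occupancy (i : Fin n) : ℝ := (1 / lam i) * ∏ k ∈ Iio i, (1 - p k)

theorem generator_apply_self (i : Fin n) : generator lam p i i = -lam i := by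
  simp [generator]

theorem generator_apply_of_succ_eq {i j : Fin n} (hji : (j : ℕ) = i + 1) :
    generator lam p i j = lam i * (1 - p i) := by
  rw [generator, of_apply, if_neg (by rintro rfl; omega), if_pos hji]

theorem generator_apply_eq_zero {i j : Fin n} (hij : j ≠ i) (hji : (j : ℕ) ≠ i + 1) :
    generator lam p i j = 0 := by
  rw [generator, of_apply, if_neg hij, if_neg hji]

theorem generator_isUpperTriangular : (generator lam p).IsUpperTriangular := fun i j hji =>
  generator_apply_eq_zero lam p (ne_of_lt hji) (by have : (j : ℕ) < i := hji; omega)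

theorem det_generator_ne_zero (hlam : ∀ i, lam i ≠ 0) : (generator lam p).det ≠ 0 := by
  rw [det_of_isUpperTriangular (generator_isUpperTriangular lam p)]
  exact prod_ne_zero_iff.mpr fun i _ => by
    rw [generator_apply_self]; exact neg_ne_zero.mpr (hlam i)

theorem sum_generator_row_of_succ_lt {i : Fin n} (hi : (i : ℕ) + 1 < n) :
    ∑ j, generator lam p i j = -(lam i * p i) := by
  let i' : Fin n := ⟨i + 1, hi⟩
  rw [Fintype.sum_eq_add i i' (by simp [i', Fin.ext_iff]) fun j hj =>
      generator_apply_eq_zero lam p hj.1 fun h => hj.2 (Fin.ext h),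
    generator_apply_self, generator_apply_of_succ_eq lam p rfl]
  ring

theorem sum_generator_row_of_succ_eq {i : Fin n} (hi : (i : ℕ) + 1 = n) :
    ∑ j, generator lam p i j = -lam i := by
  rw [Fintype.sum_eq_single i fun j hj =>
      generator_apply_eq_zero lam p hj (by have := j.isLt; omega),
    generator_apply_self]

theorem vecMul_generator_apply_of_eq_zero (w : Fin n → ℝ) {i : Fin n} (hi : (i : ℕ) = 0) :
    (w ᵥ* generator lam p) i = -(lam i * w i) := by
  rw [vecMul, dotProduct, Fintype.sum_eq_single i fun k hk =>
      by rw [generator_apply_eq_zero lam p (Ne.symm hk) (by omega), mul_zero],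
    generator_apply_self]
  ring

theorem vecMul_generator_apply_of_succ_eq (w : Fin n → ℝ) {i j : Fin n}
    (hji : (j : ℕ) + 1 = i) :
    (w ᵥ* generator lam p) i = w j * (lam j * (1 - p j)) - lam i * w i := by
  rw [vecMul, dotProduct, Fintype.sum_eq_add j i (by rintro rfl; omega) fun k hk =>
      by rw [generator_apply_eq_zero lam p (Ne.symm hk.2)
        (fun h => hk.1 (Fin.ext (by omega))), mul_zero],
    generator_apply_of_succ_eq lam p hji.symm, generator_apply_self]
  ring

variable {lam}

theorem lam_mul_occupancy (hlam : ∀ i, lam i ≠ 0) (i : Fin n) :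
    lam i * occupancy lam p i = ∏ k ∈ Iio i, (1 - p k) := by
  rw [occupancy, ← mul_assoc, mul_one_div_cancel (hlam i), one_mul]

theorem occupancy_zero (hn : 0 < n) : occupancy lam p ⟨0, hn⟩ = 1 / lam ⟨0, hn⟩ := by
  have hIio : Iio (⟨0, hn⟩ : Fin n) = ∅ := by ext k; simp [Fin.lt_def]
  rw [occupancy, hIio, prod_empty, mul_one]

theorem occupancy_balance (hlam : ∀ i, lam i ≠ 0) {i j : Fin n} (hji : (j : ℕ) + 1 = i) :
    occupancy lam p j * (lam j * (1 - p j)) = lam i * occupancy lam p i := by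
  rw [lam_mul_occupancy p hlam, prod_Iio_of_succ_eq _ hji, ← lam_mul_occupancy p hlam]
  ring

theorem occupancy_ne_zero (hlam : ∀ i, lam i ≠ 0)
    (hp : ∀ k : Fin n, (k : ℕ) + 1 < n → p k ≠ 1) (i : Fin n) :
    occupancy lam p i ≠ 0 := by
  refine mul_ne_zero (one_div_ne_zero (hlam i)) (prod_ne_zero_iff.mpr fun k hk => ?_)
  have hki : (k : ℕ) < i := Fin.lt_def.mp (mem_Iio.mp hk)
  exact sub_ne_zero.mpr (hp k (by omega)).symm

theorem neg_sum_generator_row_mul_occupancy (hlam : ∀ i, lam i ≠ 0) {i : Fin n}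
    (hlast : (i : ℕ) + 1 = n → p i = 1) :
    -(∑ j, generator lam p i j) * occupancy lam p i = p i * ∏ k ∈ Iio i, (1 - p k) := by
  rw [← lam_mul_occupancy p hlam]
  rcases Nat.lt_or_ge ((i : ℕ) + 1) n with hi | hi
  · rw [sum_generator_row_of_succ_lt lam p hi]; ring
  · rw [sum_generator_row_of_succ_eq lam p (by omega), hlast (by omega)]; ring

theorem occupancy_vecMul_generator (hn : 0 < n) (hlam : ∀ i, lam i ≠ 0) :
    occupancy lam p ᵥ* generator lam p = -Pi.single (⟨0, hn⟩ : Fin n) 1 := by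
  funext i
  obtain ⟨_ | j, hi⟩ := i
  · rw [vecMul_generator_apply_of_eq_zero lam p _ rfl, occupancy_zero p hn,
      mul_one_div_cancel (hlam _), Pi.neg_apply, Pi.single_eq_same]
  · rw [vecMul_generator_apply_of_succ_eq lam p _ (j := ⟨j, by omega⟩) (i := ⟨j + 1, hi⟩)
        rfl,
      occupancy_balance p hlam (i := ⟨j + 1, hi⟩) rfl, sub_self, Pi.neg_apply,
      Pi.single_eq_of_ne (by simp [Fin.ext_iff]), neg_zero]

end Coxian

open Coxian in
/-- Time-reversal of a (generalized) Coxian representation started in phase 1: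
`ν_i = (1/λ_i) ∏_{k<i}(1-p_k)`, the reversed generator has `-λ_i` on the
diagonal and `λ_i` on the subdiagonal, `α*_i = p_i ∏_{k<i}(1-p_k)`, and
`t* = λ_1 e₁ᵀ`. -/
theorem coxian_reversal {n : ℕ} (hn : 0 < n) (lam p : Fin n → ℝ)
    (hlam : ∀ i, 0 < lam i)
    (hp : ∀ i : Fin n, (i : ℕ) < n - 1 → p i ∈ Set.Ico (0 : ℝ) 1)
    (hpn : p (⟨n - 1, Nat.sub_lt hn one_pos⟩ : Fin n) = 1)
    (T : Matrix (Fin n) (Fin n) ℝ)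
    (hTdef : T = Matrix.of fun i j : Fin n => if j = i then -lam i
      else if (j : ℕ) = (i : ℕ) + 1 then lam i * (1 - p i) else 0)
    (α : Fin n → ℝ) (hα : α = Pi.single (⟨0, hn⟩ : Fin n) 1)
    (ν : Fin n → ℝ) (hν : ν = -(α ᵥ* T⁻¹))
    (αstar : Fin n → ℝ)
    (hαstar : αstar = (fun i => -(∑ j, T i j)) ᵥ* Matrix.diagonal ν)
    (Tstar : Matrix (Fin n) (Fin n) ℝ)
    (hTstar : Tstar = (Matrix.diagonal ν)⁻¹ * Tᵀ * Matrix.diagonal ν)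
    (tstar : Fin n → ℝ) (htstar : tstar = (Matrix.diagonal ν)⁻¹ *ᵥ α) :
    (∀ i, ν i = (1 / lam i) * ∏ k ∈ Finset.Iio i, (1 - p k)) ∧
      (∀ i, Tstar i i = -lam i) ∧
      (∀ i j : Fin n, (j : ℕ) + 1 = (i : ℕ) → Tstar i j = lam i) ∧
      (∀ i, αstar i = p i * ∏ k ∈ Finset.Iio i, (1 - p k)) ∧
      tstar = Pi.single (⟨0, hn⟩ : Fin n) (lam ⟨0, hn⟩) := by
  have hlam0 : ∀ i, lam i ≠ 0 := fun i => (hlam i).ne'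
  obtain rfl : T = generator lam p := hTdef
  obtain rfl : ν = occupancy lam p := by
    rw [hν, hα, neg_vecMul_inv_eq_of_vecMul_eq (det_generator_ne_zero lam p hlam0)
      (occupancy_vecMul_generator p hn hlam0)]
  have hν0 := occupancy_ne_zero p hlam0 fun k hk => (hp k (by omega)).2.ne
  subst hTstar hαstar htstar hα
  refine ⟨fun i => rfl, fun i => ?_, fun i j hji => ?_, fun i => ?_, ?_⟩
  · rw [diagonal_inv_mul_transpose_mul_diagonal_apply hν0, generator_apply_self]
    field_simp [hν0 i]
  · rw [diagonal_inv_mul_transpose_mul_diagonal_apply hν0, mul_assoc,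
      generator_apply_of_succ_eq lam p hji.symm, mul_comm _ (occupancy lam p j),
      occupancy_balance p hlam0 hji]
    field_simp [hν0 i]
  · refine (vecMul_diagonal _ _ _).trans
      (neg_sum_generator_row_mul_occupancy p hlam0 fun hi => ?_)
    obtain rfl : i = ⟨n - 1, Nat.sub_lt hn one_pos⟩ := Fin.ext (by simp only; omega)
    exact hpn
  · rw [inv_diagonal_of_ne_zero hν0, diagonal_mulVec_single, Pi.inv_apply, occupancy_zero,
      one_div, inv_inv, mul_one]
end

section
/- Define recursively the weights: p̄(1;1) = p̲(1;1) = 1, p̄(1;k) = p̲(1;k) = 0 for k ≥ 2, and for 2 ≤ i ≤ k: p̄(i;k) = Σ_{ℓ=i-1}^{k-1} p̄(i-1;ℓ) Σ_{j=1}^{k-ℓ} p̲(j;k-ℓ) θ_+^j and p̲(i;k) = Σ_{ℓ=i-1}^{k-1} p̲(i-1;ℓ) Σ_{j=1}^{k-ℓ} p̄(j;k-ℓ) θ_-^j, where θ_+ + θ_- = 1 with θ_+, θ_- ∈ (0,1). Then for every k ≥ 1, all weights p̄(i;k), p̲(i;k) are nonnegative and the totals q̄(k) = Σ_{i=1}^k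 p̄(i;k) and q̲(k) = Σ_{i=1}^k p̲(i;k) satisfy 0 < q̄(k) ≤ 1 and 0 < q̲(k) ≤ 1. -/
open Finset

private lemma triSwap (F : ℕ → ℕ → ℝ) (k : ℕ) :
    ∑ i ∈ Icc 2 k, ∑ l ∈ Icc (i - 1) (k - 1), F i l
      = ∑ l ∈ Icc 1 (k - 1), ∑ i ∈ Icc 2 (l + 1), F i l :=
  Finset.sum_comm' (by intro x y; simp only [mem_Icc]; omega)

private lemma triSwap2 (F : ℕ → ℕ → ℝ) (k : ℕ) :
    ∑ m ∈ Icc 2 k, ∑ l ∈ Icc 1 (m - 1), F m l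
      = ∑ l ∈ Icc 1 (k - 1), ∑ m ∈ Icc (l + 1) k, F m l :=
  Finset.sum_comm' (by intro x y; simp only [mem_Icc]; omega)

private lemma shiftIdx (h : ℕ → ℝ) (l : ℕ) :
    ∑ i ∈ Icc 2 (l + 1), h (i - 1) = ∑ i ∈ Icc 1 l, h i :=
  Finset.sum_nbij' (fun i => i - 1) (fun i => i + 1)
    (by intro a ha; simp only [mem_Icc] at *; omega)
    (by intro a ha; simp only [mem_Icc] at *; omega)
    (by intro a ha; simp only [mem_Icc] at ha; omega)
    (by intro a ha; simp only [mem_Icc] at ha; omega)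
    (by intro a ha; rfl)

private lemma shiftIdx2 (h : ℕ → ℝ) (l k : ℕ) :
    ∑ m ∈ Icc (l + 1) k, h (m - l) = ∑ r ∈ Icc 1 (k - l), h r :=
  Finset.sum_nbij' (fun m => m - l) (fun r => r + l)
    (by intro a ha; simp only [mem_Icc] at *; omega)
    (by intro a ha; simp only [mem_Icc] at *; omega)
    (by intro a ha; simp only [mem_Icc] at ha; omega)
    (by intro a ha; simp only [mem_Icc] at ha; omega)
    (by intro a ha; rfl)

private lemma reflectIdx (h : ℕ → ℝ) (k : ℕ) :
    ∑ l ∈ Icc 1 (k - 1), h (k - l) = ∑ m ∈ Icc 1 (k - 1), h m :=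
  Finset.sum_nbij' (fun l => k - l) (fun m => k - m)
    (by intro a ha; simp only [mem_Icc] at *; omega)
    (by intro a ha; simp only [mem_Icc] at *; omega)
    (by intro a ha; simp only [mem_Icc] at ha; omega)
    (by intro a ha; simp only [mem_Icc] at ha; omega)
    (by intro a ha; rfl)

private lemma splitBot (h : ℕ → ℝ) (k : ℕ) (hk : 1 ≤ k) :
    ∑ i ∈ Icc 1 k, h i = h 1 + ∑ i ∈ Icc 2 k, h i := by
  rw [show Icc 1 k = insert 1 (Icc 2 k) by ext x; simp only [mem_insert, mem_Icc]; omega,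
    Finset.sum_insert (by simp)]

/-- The total mass `∑ i, p i k` decomposes as a convolution over the first renewal epoch. -/
private lemma Qident (p q : ℕ → ℕ → ℝ) (θ : ℝ)
    (h1 : ∀ k, 2 ≤ k → p 1 k = 0)
    (hrec : ∀ i k, 2 ≤ i → i ≤ k →
      p i k = ∑ l ∈ Icc (i - 1) (k - 1), p (i - 1) l *
        ∑ j ∈ Icc 1 (k - l), q j (k - l) * θ ^ j)
    (k : ℕ) (hk : 2 ≤ k) :
    ∑ i ∈ Icc 1 k, p i k
      = ∑ l ∈ Icc 1 (k - 1), (∑ i ∈ Icc 1 l, p i l) *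
          (∑ j ∈ Icc 1 (k - l), q j (k - l) * θ ^ j) := by
  calc ∑ i ∈ Icc 1 k, p i k
      = p 1 k + ∑ i ∈ Icc 2 k, p i k := splitBot (fun i => p i k) k (by omega)
    _ = ∑ i ∈ Icc 2 k, p i k := by rw [h1 k hk, zero_add]
    _ = ∑ i ∈ Icc 2 k, ∑ l ∈ Icc (i - 1) (k - 1), p (i - 1) l *
          ∑ j ∈ Icc 1 (k - l), q j (k - l) * θ ^ j :=
        Finset.sum_congr rfl fun i hi => hrec i k (mem_Icc.mp hi).1 (mem_Icc.mp hi).2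
    _ = ∑ l ∈ Icc 1 (k - 1), ∑ i ∈ Icc 2 (l + 1), p (i - 1) l *
          ∑ j ∈ Icc 1 (k - l), q j (k - l) * θ ^ j := triSwap _ k
    _ = ∑ l ∈ Icc 1 (k - 1), (∑ i ∈ Icc 1 l, p i l) *
          (∑ j ∈ Icc 1 (k - l), q j (k - l) * θ ^ j) := by
        refine Finset.sum_congr rfl fun l hl => ?_
        rw [Finset.sum_mul]
        exact shiftIdx (fun n => p n l * ∑ j ∈ Icc 1 (k - l), q j (k - l) * θ ^ j) l

/-- The tilted sum `∑ j, q j k θ^j` satisfies a self-contained convolution recursion. -/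
private lemma Sident (p q : ℕ → ℕ → ℝ) (θ θ' : ℝ)
    (h1 : ∀ k, 2 ≤ k → q 1 k = 0)
    (hrec : ∀ i k, 2 ≤ i → i ≤ k →
      q i k = ∑ l ∈ Icc (i - 1) (k - 1), q (i - 1) l *
        ∑ j ∈ Icc 1 (k - l), p j (k - l) * θ' ^ j)
    (k : ℕ) (hk : 2 ≤ k) :
    ∑ j ∈ Icc 1 k, q j k * θ ^ j
      = ∑ l ∈ Icc 1 (k - 1), (∑ j ∈ Icc 1 l, q j l * θ ^ j) *
          (θ * ∑ j ∈ Icc 1 (k - l), p j (k - l) * θ' ^ j) := by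
  calc ∑ j ∈ Icc 1 k, q j k * θ ^ j
      = q 1 k * θ ^ 1 + ∑ j ∈ Icc 2 k, q j k * θ ^ j :=
        splitBot (fun j => q j k * θ ^ j) k (by omega)
    _ = ∑ j ∈ Icc 2 k, q j k * θ ^ j := by rw [h1 k hk]; ring
    _ = ∑ j ∈ Icc 2 k, ∑ l ∈ Icc (j - 1) (k - 1), q (j - 1) l *
          (∑ i ∈ Icc 1 (k - l), p i (k - l) * θ' ^ i) * θ ^ j := by
        refine Finset.sum_congr rfl fun j hj => ?_
        rw [hrec j k (mem_Icc.mp hj).1 (mem_Icc.mp hj).2, Finset.sum_mul]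
    _ = ∑ l ∈ Icc 1 (k - 1), ∑ j ∈ Icc 2 (l + 1), q (j - 1) l *
          (∑ i ∈ Icc 1 (k - l), p i (k - l) * θ' ^ i) * θ ^ j := triSwap _ k
    _ = ∑ l ∈ Icc 1 (k - 1), (∑ j ∈ Icc 1 l, q j l * θ ^ j) *
          (θ * ∑ j ∈ Icc 1 (k - l), p j (k - l) * θ' ^ j) := by
        refine Finset.sum_congr rfl fun l hl => ?_
        calc ∑ j ∈ Icc 2 (l + 1), q (j - 1) l *
                (∑ i ∈ Icc 1 (k - l), p i (k - l) * θ' ^ i) * θ ^ j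
            = ∑ j ∈ Icc 2 (l + 1), q (j - 1) l *
                (∑ i ∈ Icc 1 (k - l), p i (k - l) * θ' ^ i) * θ ^ (j - 1 + 1) := by
              refine Finset.sum_congr rfl fun j hj => ?_
              simp only [mem_Icc] at hj
              have h : j - 1 + 1 = j := by omega
              rw [h]
          _ = ∑ n ∈ Icc 1 l, q n l *
                (∑ i ∈ Icc 1 (k - l), p i (k - l) * θ' ^ i) * θ ^ (n + 1) :=
              shiftIdx (fun n => q n l *
                (∑ i ∈ Icc 1 (k - l), p i (k - l) * θ' ^ i) * θ ^ (n + 1)) l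
          _ = (∑ j ∈ Icc 1 l, q j l * θ ^ j) *
                (θ * ∑ j ∈ Icc 1 (k - l), p j (k - l) * θ' ^ j) := by
              rw [Finset.sum_mul]
              refine Finset.sum_congr rfl fun n _ => ?_
              ring

/-- The BM-Erlang mixture weights `p̄(i;k)`, `p̲(i;k)` defined by the recursion
of Proposition 3.2 are nonnegative, and the totals
`q̄(k) = Σ_i p̄(i;k)`, `q̲(k) = Σ_i p̲(i;k)` lie in `(0, 1]`. -/
theorem bm_erlang_weights_bounds (θp θm : ℝ)
    (hθp : θp ∈ Set.Ioo (0 : ℝ) 1) (hθm : θm ∈ Set.Ioo (0 : ℝ) 1)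
    (hsum : θp + θm = 1)
    (pbar pund : ℕ → ℕ → ℝ)
    (hbar11 : pbar 1 1 = 1) (hund11 : pund 1 1 = 1)
    (h1k : ∀ k, 2 ≤ k → pbar 1 k = 0 ∧ pund 1 k = 0)
    (hrecbar : ∀ i k, 2 ≤ i → i ≤ k →
      pbar i k = ∑ l ∈ Finset.Icc (i - 1) (k - 1), pbar (i - 1) l *
        ∑ j ∈ Finset.Icc 1 (k - l), pund j (k - l) * θp ^ j)
    (hrecund : ∀ i k, 2 ≤ i → i ≤ k →
      pund i k = ∑ l ∈ Finset.Icc (i - 1) (k - 1), pund (i - 1) l *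
        ∑ j ∈ Finset.Icc 1 (k - l), pbar j (k - l) * θm ^ j) :
    ∀ k, 1 ≤ k →
      (∀ i, 1 ≤ i → i ≤ k → 0 ≤ pbar i k ∧ 0 ≤ pund i k) ∧
      (0 < ∑ i ∈ Finset.Icc 1 k, pbar i k ∧ ∑ i ∈ Finset.Icc 1 k, pbar i k ≤ 1) ∧
      (0 < ∑ i ∈ Finset.Icc 1 k, pund i k ∧ ∑ i ∈ Finset.Icc 1 k, pund i k ≤ 1) := by
  obtain ⟨hθp0, hθp1⟩ := hθp
  obtain ⟨hθm0, hθm1⟩ := hθm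
  set u : ℝ := min 1 (θp / θm) with hu
  set v : ℝ := min 1 (θm / θp) with hv
  have hu1 : u ≤ 1 := min_le_left _ _
  have hv1 : v ≤ 1 := min_le_left _ _
  have hθpu : θp ≤ u := le_min hθp1.le (by rw [le_div_iff₀ hθm0]; nlinarith)
  have hθmv : θm ≤ v := le_min hθm1.le (by rw [le_div_iff₀ hθp0]; nlinarith)
  have hv0 : 0 ≤ v := le_trans hθm0.le hθmv
  have hpne : θp ≠ 0 := ne_of_gt hθp0
  have hmne : θm ≠ 0 := ne_of_gt hθm0
  have hufix : θp * (1 + u * v) ≤ u := by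
    rcases le_total θp θm with h | h
    · have h1 : u = θp / θm := min_eq_right (by rw [div_le_one hθm0]; exact h)
      have h2 : v = 1 := min_eq_left (by rw [le_div_iff₀ hθp0]; nlinarith)
      rw [h1, h2]
      have e : θp * (1 + θp / θm * 1) = θp * (θm + θp) / θm := by field_simp
      rw [e, show θm + θp = 1 by linarith, mul_one]
    · have h1 : u = 1 := min_eq_left (by rw [le_div_iff₀ hθm0]; nlinarith)
      have h2 : v = θm / θp := min_eq_right (by rw [div_le_one hθp0]; exact h)
      rw [h1, h2]
      have e : θp * (1 + 1 * (θm / θp)) = θp + θm := by field_simp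
      rw [e, hsum]
  have hvfix : θm * (1 + u * v) ≤ v := by
    rcases le_total θp θm with h | h
    · have h1 : u = θp / θm := min_eq_right (by rw [div_le_one hθm0]; exact h)
      have h2 : v = 1 := min_eq_left (by rw [le_div_iff₀ hθp0]; nlinarith)
      rw [h1, h2]
      have e : θm * (1 + θp / θm * 1) = θm + θp := by field_simp
      rw [e, show θm + θp = 1 by linarith]
    · have h1 : u = 1 := min_eq_left (by rw [le_div_iff₀ hθm0]; nlinarith)
      have h2 : v = θm / θp := min_eq_right (by rw [div_le_one hθp0]; exact h)
      rw [h1, h2]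
      have e : θm * (1 + 1 * (θm / θp)) = θm * (θp + θm) / θp := by field_simp
      rw [e, hsum, mul_one]
  have main : ∀ k, 1 ≤ k →
      (∀ i, 1 ≤ i → i ≤ k → 0 ≤ pbar i k ∧ 0 ≤ pund i k) ∧
      (0 < ∑ i ∈ Finset.Icc 1 k, pbar i k ∧ ∑ i ∈ Finset.Icc 1 k, pbar i k ≤ 1) ∧
      (0 < ∑ i ∈ Finset.Icc 1 k, pund i k ∧ ∑ i ∈ Finset.Icc 1 k, pund i k ≤ 1) ∧
      (∑ m ∈ Finset.Icc 1 k, ∑ j ∈ Finset.Icc 1 m, pund j m * θp ^ j ≤ u) ∧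
      (∑ m ∈ Finset.Icc 1 k, ∑ j ∈ Finset.Icc 1 m, pbar j m * θm ^ j ≤ v) := by
    intro k
    induction k using Nat.strong_induction_on with
    | _ k IH =>
    intro hk1
    by_cases hk : k = 1
    · subst hk
      have e1 : ∑ i ∈ Finset.Icc 1 1, pbar i 1 = 1 := by
        rw [Finset.Icc_self, Finset.sum_singleton, hbar11]
      have e2 : ∑ i ∈ Finset.Icc 1 1, pund i 1 = 1 := by
        rw [Finset.Icc_self, Finset.sum_singleton, hund11]
      have e3 : ∑ m ∈ Finset.Icc 1 1, ∑ j ∈ Finset.Icc 1 m, pund j m * θp ^ j = θp := by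
        rw [Finset.Icc_self, Finset.sum_singleton, Finset.Icc_self, Finset.sum_singleton,
          hund11, pow_one, one_mul]
      have e4 : ∑ m ∈ Finset.Icc 1 1, ∑ j ∈ Finset.Icc 1 m, pbar j m * θm ^ j = θm := by
        rw [Finset.Icc_self, Finset.sum_singleton, Finset.Icc_self, Finset.sum_singleton,
          hbar11, pow_one, one_mul]
      refine ⟨?_, ⟨by rw [e1]; norm_num, by rw [e1]⟩, ⟨by rw [e2]; norm_num, by rw [e2]⟩,
        by rw [e3]; exact hθpu, by rw [e4]; exact hθmv⟩
      intro i h1 h2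
      have hi : i = 1 := by omega
      subst hi
      exact ⟨by rw [hbar11]; norm_num, by rw [hund11]; norm_num⟩
    · have h2k : 2 ≤ k := by omega
      -- nonnegativity at level k
      have hnn : ∀ i, 1 ≤ i → i ≤ k → 0 ≤ pbar i k ∧ 0 ≤ pund i k := by
        intro i h1 h2
        rcases eq_or_lt_of_le h1 with h | h
        · exact ⟨by rw [← h, (h1k k h2k).1], by rw [← h, (h1k k h2k).2]⟩
        · have h2i : 2 ≤ i := h
          constructor
          · rw [hrecbar i k h2i h2]
            refine Finset.sum_nonneg fun l hl => ?_
            simp only [Finset.mem_Icc] at hl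
            refine mul_nonneg (((IH l (by omega) (by omega)).1 (i - 1) (by omega) (by omega)).1)
              (Finset.sum_nonneg fun j hj => ?_)
            simp only [Finset.mem_Icc] at hj
            exact mul_nonneg (((IH (k - l) (by omega) (by omega)).1 j hj.1 hj.2).2)
              (pow_nonneg hθp0.le j)
          · rw [hrecund i k h2i h2]
            refine Finset.sum_nonneg fun l hl => ?_
            simp only [Finset.mem_Icc] at hl
            refine mul_nonneg (((IH l (by omega) (by omega)).1 (i - 1) (by omega) (by omega)).2)
              (Finset.sum_nonneg fun j hj => ?_)
            simp only [Finset.mem_Icc] at hj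
            exact mul_nonneg (((IH (k - l) (by omega) (by omega)).1 j hj.1 hj.2).1)
              (pow_nonneg hθm0.le j)
      -- nonnegativity of tilted sums below level k
      have hSpnn : ∀ m, 1 ≤ m → m < k → 0 ≤ ∑ j ∈ Finset.Icc 1 m, pund j m * θp ^ j := by
        intro m h1 h2
        refine Finset.sum_nonneg fun j hj => ?_
        simp only [Finset.mem_Icc] at hj
        exact mul_nonneg (((IH m h2 h1).1 j hj.1 hj.2).2) (pow_nonneg hθp0.le j)
      have hSmnn : ∀ m, 1 ≤ m → m < k → 0 ≤ ∑ j ∈ Finset.Icc 1 m, pbar j m * θm ^ j := by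
        intro m h1 h2
        refine Finset.sum_nonneg fun j hj => ?_
        simp only [Finset.mem_Icc] at hj
        exact mul_nonneg (((IH m h2 h1).1 j hj.1 hj.2).1) (pow_nonneg hθm0.le j)
      -- convolution identities for the totals
      have hQb := Qident pbar pund θp (fun n hn => (h1k n hn).1) hrecbar k h2k
      have hQu := Qident pund pbar θm (fun n hn => (h1k n hn).2) hrecund k h2k
      -- upper bounds for the totals
      have hQb_le : ∑ i ∈ Finset.Icc 1 k, pbar i k ≤ 1 := by
        rw [hQb]
        calc ∑ l ∈ Finset.Icc 1 (k - 1), (∑ i ∈ Finset.Icc 1 l, pbar i l) *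
              (∑ j ∈ Finset.Icc 1 (k - l), pund j (k - l) * θp ^ j)
            ≤ ∑ l ∈ Finset.Icc 1 (k - 1),
              (∑ j ∈ Finset.Icc 1 (k - l), pund j (k - l) * θp ^ j) := by
              refine Finset.sum_le_sum fun l hl => ?_
              simp only [Finset.mem_Icc] at hl
              have := mul_le_mul_of_nonneg_right ((IH l (by omega) (by omega)).2.1.2)
                (hSpnn (k - l) (by omega) (by omega))
              simpa using this
          _ = ∑ m ∈ Finset.Icc 1 (k - 1), ∑ j ∈ Finset.Icc 1 m, pund j m * θp ^ j :=
              reflectIdx (fun m => ∑ j ∈ Finset.Icc 1 m, pund j m * θp ^ j) k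
          _ ≤ u := (IH (k - 1) (by omega) (by omega)).2.2.2.1
          _ ≤ 1 := hu1
      have hQu_le : ∑ i ∈ Finset.Icc 1 k, pund i k ≤ 1 := by
        rw [hQu]
        calc ∑ l ∈ Finset.Icc 1 (k - 1), (∑ i ∈ Finset.Icc 1 l, pund i l) *
              (∑ j ∈ Finset.Icc 1 (k - l), pbar j (k - l) * θm ^ j)
            ≤ ∑ l ∈ Finset.Icc 1 (k - 1),
              (∑ j ∈ Finset.Icc 1 (k - l), pbar j (k - l) * θm ^ j) := by
              refine Finset.sum_le_sum fun l hl => ?_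
              simp only [Finset.mem_Icc] at hl
              have := mul_le_mul_of_nonneg_right ((IH l (by omega) (by omega)).2.2.1.2)
                (hSmnn (k - l) (by omega) (by omega))
              simpa using this
          _ = ∑ m ∈ Finset.Icc 1 (k - 1), ∑ j ∈ Finset.Icc 1 m, pbar j m * θm ^ j :=
              reflectIdx (fun m => ∑ j ∈ Finset.Icc 1 m, pbar j m * θm ^ j) k
          _ ≤ v := (IH (k - 1) (by omega) (by omega)).2.2.2.2
          _ ≤ 1 := hv1
      -- positivity of the totals
      have hmem : k - 1 ∈ Finset.Icc 1 (k - 1) := by simp only [Finset.mem_Icc]; omega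
      have hk1k : k - (k - 1) = 1 := by omega
      have hQb_pos : 0 < ∑ i ∈ Finset.Icc 1 k, pbar i k := by
        rw [hQb]
        have hterm : 0 < (∑ i ∈ Finset.Icc 1 (k - 1), pbar i (k - 1)) *
            (∑ j ∈ Finset.Icc 1 (k - (k - 1)), pund j (k - (k - 1)) * θp ^ j) := by
          rw [hk1k, Finset.Icc_self, Finset.sum_singleton, hund11, pow_one, one_mul]
          exact mul_pos (IH (k - 1) (by omega) (by omega)).2.1.1 hθp0
        refine lt_of_lt_of_le hterm (Finset.single_le_sum
          (f := fun l => (∑ i ∈ Finset.Icc 1 l, pbar i l) *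
            ∑ j ∈ Finset.Icc 1 (k - l), pund j (k - l) * θp ^ j) (fun l hl => ?_) hmem)
        simp only [Finset.mem_Icc] at hl
        exact mul_nonneg (IH l (by omega) (by omega)).2.1.1.le
          (hSpnn (k - l) (by omega) (by omega))
      have hQu_pos : 0 < ∑ i ∈ Finset.Icc 1 k, pund i k := by
        rw [hQu]
        have hterm : 0 < (∑ i ∈ Finset.Icc 1 (k - 1), pund i (k - 1)) *
            (∑ j ∈ Finset.Icc 1 (k - (k - 1)), pbar j (k - (k - 1)) * θm ^ j) := by
          rw [hk1k, Finset.Icc_self, Finset.sum_singleton, hbar11, pow_one, one_mul]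
          exact mul_pos (IH (k - 1) (by omega) (by omega)).2.2.1.1 hθm0
        refine lt_of_lt_of_le hterm (Finset.single_le_sum
          (f := fun l => (∑ i ∈ Finset.Icc 1 l, pund i l) *
            ∑ j ∈ Finset.Icc 1 (k - l), pbar j (k - l) * θm ^ j) (fun l hl => ?_) hmem)
        simp only [Finset.mem_Icc] at hl
        exact mul_nonneg (IH l (by omega) (by omega)).2.2.1.1.le
          (hSmnn (k - l) (by omega) (by omega))
      -- cumulative tilted-sum bounds
      have hSp1 : ∑ j ∈ Finset.Icc 1 1, pund j 1 * θp ^ j = θp := by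
        rw [Finset.Icc_self, Finset.sum_singleton, hund11, pow_one, one_mul]
      have hSm1 : ∑ j ∈ Finset.Icc 1 1, pbar j 1 * θm ^ j = θm := by
        rw [Finset.Icc_self, Finset.sum_singleton, hbar11, pow_one, one_mul]
      have hU : ∑ m ∈ Finset.Icc 1 k, ∑ j ∈ Finset.Icc 1 m, pund j m * θp ^ j ≤ u := by
        have hsplit : ∑ m ∈ Finset.Icc 1 k, ∑ j ∈ Finset.Icc 1 m, pund j m * θp ^ j
            = (∑ j ∈ Finset.Icc 1 1, pund j 1 * θp ^ j)
              + ∑ m ∈ Finset.Icc 2 k, ∑ j ∈ Finset.Icc 1 m, pund j m * θp ^ j :=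
          splitBot (fun m => ∑ j ∈ Finset.Icc 1 m, pund j m * θp ^ j) k (by omega)
        rw [hsplit, hSp1]
        have step : ∑ m ∈ Finset.Icc 2 k, ∑ j ∈ Finset.Icc 1 m, pund j m * θp ^ j
            ≤ θp * (u * v) := by
          have exp : ∑ m ∈ Finset.Icc 2 k, ∑ j ∈ Finset.Icc 1 m, pund j m * θp ^ j
              = ∑ m ∈ Finset.Icc 2 k, ∑ l ∈ Finset.Icc 1 (m - 1),
                  (∑ j ∈ Finset.Icc 1 l, pund j l * θp ^ j) *
                  (θp * ∑ j ∈ Finset.Icc 1 (m - l), pbar j (m - l) * θm ^ j) := by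
            refine Finset.sum_congr rfl fun m hm => ?_
            simp only [Finset.mem_Icc] at hm
            exact Sident pbar pund θp θm (fun n hn => (h1k n hn).2) hrecund m hm.1
          rw [exp, triSwap2 (fun m l => (∑ j ∈ Finset.Icc 1 l, pund j l * θp ^ j) *
            (θp * ∑ j ∈ Finset.Icc 1 (m - l), pbar j (m - l) * θm ^ j)) k]
          calc ∑ l ∈ Finset.Icc 1 (k - 1), ∑ m ∈ Finset.Icc (l + 1) k,
                (∑ j ∈ Finset.Icc 1 l, pund j l * θp ^ j) *
                (θp * ∑ j ∈ Finset.Icc 1 (m - l), pbar j (m - l) * θm ^ j)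
              ≤ ∑ l ∈ Finset.Icc 1 (k - 1),
                (∑ j ∈ Finset.Icc 1 l, pund j l * θp ^ j) * (θp * v) := by
                refine Finset.sum_le_sum fun l hl => ?_
                simp only [Finset.mem_Icc] at hl
                have e : ∑ m ∈ Finset.Icc (l + 1) k,
                    (∑ j ∈ Finset.Icc 1 l, pund j l * θp ^ j) *
                    (θp * ∑ j ∈ Finset.Icc 1 (m - l), pbar j (m - l) * θm ^ j)
                    = (∑ j ∈ Finset.Icc 1 l, pund j l * θp ^ j) * θp *
                      ∑ r ∈ Finset.Icc 1 (k - l), ∑ j ∈ Finset.Icc 1 r, pbar j r * θm ^ j := by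
                  rw [Finset.mul_sum,
                    ← shiftIdx2 (fun r => (∑ j ∈ Finset.Icc 1 l, pund j l * θp ^ j) * θp *
                      ∑ j ∈ Finset.Icc 1 r, pbar j r * θm ^ j) l k]
                  exact Finset.sum_congr rfl fun m _ => by ring
                rw [e]
                have hin : ∑ r ∈ Finset.Icc 1 (k - l), ∑ j ∈ Finset.Icc 1 r, pbar j r * θm ^ j
                    ≤ v := (IH (k - l) (by omega) (by omega)).2.2.2.2
                have hfac : 0 ≤ (∑ j ∈ Finset.Icc 1 l, pund j l * θp ^ j) * θp :=
                  mul_nonneg (hSpnn l (by omega) (by omega)) hθp0.le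
                calc (∑ j ∈ Finset.Icc 1 l, pund j l * θp ^ j) * θp *
                      ∑ r ∈ Finset.Icc 1 (k - l), ∑ j ∈ Finset.Icc 1 r, pbar j r * θm ^ j
                    ≤ (∑ j ∈ Finset.Icc 1 l, pund j l * θp ^ j) * θp * v :=
                      mul_le_mul_of_nonneg_left hin hfac
                  _ = (∑ j ∈ Finset.Icc 1 l, pund j l * θp ^ j) * (θp * v) := by ring
            _ = (∑ l ∈ Finset.Icc 1 (k - 1), ∑ j ∈ Finset.Icc 1 l, pund j l * θp ^ j) *
                  (θp * v) := (Finset.sum_mul _ _ _).symm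
            _ ≤ u * (θp * v) := by
                refine mul_le_mul_of_nonneg_right ((IH (k - 1) (by omega) (by omega)).2.2.2.1) ?_
                exact mul_nonneg hθp0.le hv0
            _ = θp * (u * v) := by ring
        linarith [hufix]
      have hV : ∑ m ∈ Finset.Icc 1 k, ∑ j ∈ Finset.Icc 1 m, pbar j m * θm ^ j ≤ v := by
        have hsplit : ∑ m ∈ Finset.Icc 1 k, ∑ j ∈ Finset.Icc 1 m, pbar j m * θm ^ j
            = (∑ j ∈ Finset.Icc 1 1, pbar j 1 * θm ^ j)
              + ∑ m ∈ Finset.Icc 2 k, ∑ j ∈ Finset.Icc 1 m, pbar j m * θm ^ j :=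
          splitBot (fun m => ∑ j ∈ Finset.Icc 1 m, pbar j m * θm ^ j) k (by omega)
        rw [hsplit, hSm1]
        have step : ∑ m ∈ Finset.Icc 2 k, ∑ j ∈ Finset.Icc 1 m, pbar j m * θm ^ j
            ≤ θm * (u * v) := by
          have exp : ∑ m ∈ Finset.Icc 2 k, ∑ j ∈ Finset.Icc 1 m, pbar j m * θm ^ j
              = ∑ m ∈ Finset.Icc 2 k, ∑ l ∈ Finset.Icc 1 (m - 1),
                  (∑ j ∈ Finset.Icc 1 l, pbar j l * θm ^ j) *
                  (θm * ∑ j ∈ Finset.Icc 1 (m - l), pund j (m - l) * θp ^ j) := by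
            refine Finset.sum_congr rfl fun m hm => ?_
            simp only [Finset.mem_Icc] at hm
            exact Sident pund pbar θm θp (fun n hn => (h1k n hn).1) hrecbar m hm.1
          rw [exp, triSwap2 (fun m l => (∑ j ∈ Finset.Icc 1 l, pbar j l * θm ^ j) *
            (θm * ∑ j ∈ Finset.Icc 1 (m - l), pund j (m - l) * θp ^ j)) k]
          calc ∑ l ∈ Finset.Icc 1 (k - 1), ∑ m ∈ Finset.Icc (l + 1) k,
                (∑ j ∈ Finset.Icc 1 l, pbar j l * θm ^ j) *
                (θm * ∑ j ∈ Finset.Icc 1 (m - l), pund j (m - l) * θp ^ j)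
              ≤ ∑ l ∈ Finset.Icc 1 (k - 1),
                (∑ j ∈ Finset.Icc 1 l, pbar j l * θm ^ j) * (θm * u) := by
                refine Finset.sum_le_sum fun l hl => ?_
                simp only [Finset.mem_Icc] at hl
                have e : ∑ m ∈ Finset.Icc (l + 1) k,
                    (∑ j ∈ Finset.Icc 1 l, pbar j l * θm ^ j) *
                    (θm * ∑ j ∈ Finset.Icc 1 (m - l), pund j (m - l) * θp ^ j)
                    = (∑ j ∈ Finset.Icc 1 l, pbar j l * θm ^ j) * θm *
                      ∑ r ∈ Finset.Icc 1 (k - l), ∑ j ∈ Finset.Icc 1 r, pund j r * θp ^ j := by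
                  rw [Finset.mul_sum,
                    ← shiftIdx2 (fun r => (∑ j ∈ Finset.Icc 1 l, pbar j l * θm ^ j) * θm *
                      ∑ j ∈ Finset.Icc 1 r, pund j r * θp ^ j) l k]
                  exact Finset.sum_congr rfl fun m _ => by ring
                rw [e]
                have hin : ∑ r ∈ Finset.Icc 1 (k - l), ∑ j ∈ Finset.Icc 1 r, pund j r * θp ^ j
                    ≤ u := (IH (k - l) (by omega) (by omega)).2.2.2.1
                have hfac : 0 ≤ (∑ j ∈ Finset.Icc 1 l, pbar j l * θm ^ j) * θm :=
                  mul_nonneg (hSmnn l (by omega) (by omega)) hθm0.le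
                calc (∑ j ∈ Finset.Icc 1 l, pbar j l * θm ^ j) * θm *
                      ∑ r ∈ Finset.Icc 1 (k - l), ∑ j ∈ Finset.Icc 1 r, pund j r * θp ^ j
                    ≤ (∑ j ∈ Finset.Icc 1 l, pbar j l * θm ^ j) * θm * u :=
                      mul_le_mul_of_nonneg_left hin hfac
                  _ = (∑ j ∈ Finset.Icc 1 l, pbar j l * θm ^ j) * (θm * u) := by ring
            _ = (∑ l ∈ Finset.Icc 1 (k - 1), ∑ j ∈ Finset.Icc 1 l, pbar j l * θm ^ j) *
                  (θm * u) := (Finset.sum_mul _ _ _).symm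
            _ ≤ v * (θm * u) := by
                refine mul_le_mul_of_nonneg_right ((IH (k - 1) (by omega) (by omega)).2.2.2.2) ?_
                exact mul_nonneg hθm0.le (le_trans hθp0.le hθpu)
            _ = θm * (u * v) := by ring
        linarith [hvfix]
      exact ⟨hnn, ⟨hQb_pos, hQb_le⟩, ⟨hQu_pos, hQu_le⟩, hU, hV⟩
  intro k hk
  obtain ⟨a, b, c, _, _⟩ := main k hk
  exact ⟨a, b, c⟩
end

section
/- Let τ be phase-type with representation (α, T) on n phases, t = -T·1, and let J be the underlying terminating Markov jump process. Let (α*, T*) be the standard reversal. Then for all phases i, j and all s ≥ 0, the identity α_i (e^{Ts})_{ij} t_j = α*_j (e^{T*s})_{ji} t*_i holds, expressing that the probability of starting in i, being in j at time s, and terminating from j with density, equals the corresponding quantity for the reversed chain started in j and terminating from i. -/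
/-!
Since `T*` is the diagonal similarity `Δ_ν⁻¹ Tᵀ Δ_ν`, its exponential is
`e^{T*s} = Δ_ν⁻¹ (e^{Ts})ᵀ Δ_ν`, i.e. `(e^{T*s})_{ji} = ν_j⁻¹ (e^{Ts})_{ij} ν_i`. The factors
`ν_j` and `ν_i⁻¹` carried by `α*_j = t_j ν_j` and `t*_i = ν_i⁻¹ α_i` cancel them.
-/

namespace Matrix

variable {m 𝕜 : Type*} [Fintype m] [DecidableEq m]

theorem inv_diagonal_of_ne_zero_s16 [Field 𝕜] {d : m → 𝕜} (hd : ∀ k, d k ≠ 0) :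
    (diagonal d)⁻¹ = diagonal d⁻¹ :=
  inv_eq_right_inv <| by
    rw [diagonal_mul_diagonal, ← diagonal_one]
    exact congrArg diagonal (funext fun k => mul_inv_cancel₀ (hd k))

theorem exp_diagonal_conj_transpose_apply [NormedField 𝕜] [NormedAlgebra ℚ 𝕜] [CompleteSpace 𝕜]
    (A : Matrix m m 𝕜) {d : m → 𝕜} (hd : ∀ k, d k ≠ 0) (i j : m) :
    NormedSpace.exp ((diagonal d)⁻¹ * Aᵀ * diagonal d) j i =
      (d j)⁻¹ * NormedSpace.exp A i j * d i := by
  have hD : IsUnit (diagonal d) := isUnit_diagonal.mpr (Pi.isUnit_iff.mpr fun k => (hd k).isUnit)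
  rw [exp_conj' _ _ hD, exp_transpose, inv_diagonal_of_ne_zero_s16 hd, mul_diagonal, diagonal_mul,
    transpose_apply, Pi.inv_apply]

end Matrix

open Matrix

theorem phase_reversal_identity_general {n : ℕ} (T : Matrix (Fin n) (Fin n) ℝ)
    (α : Fin n → ℝ)
    (t : Fin n → ℝ)
    (ν : Fin n → ℝ) (hνpos : ∀ i, 0 < ν i)
    (αstar : Fin n → ℝ) (hαstar : αstar = t ᵥ* Matrix.diagonal ν)
    (Tstar : Matrix (Fin n) (Fin n) ℝ)
    (hTstar : Tstar = (Matrix.diagonal ν)⁻¹ * Tᵀ * Matrix.diagonal ν)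
    (tstar : Fin n → ℝ) (htstar : tstar = (Matrix.diagonal ν)⁻¹ *ᵥ α) :
    ∀ (i j : Fin n) (s : ℝ), 0 ≤ s →
      α i * (NormedSpace.exp (s • T)) i j * t j =
        αstar j * (NormedSpace.exp (s • Tstar)) j i * tstar i := by
  intro i j s _
  have hν : ∀ k, ν k ≠ 0 := fun k => (hνpos k).ne'
  have hsTstar : s • Tstar = (diagonal ν)⁻¹ * (s • T)ᵀ * diagonal ν := by
    rw [hTstar, transpose_smul, Matrix.mul_smul, Matrix.smul_mul]
  rw [hsTstar, exp_diagonal_conj_transpose_apply _ hν, hαstar, vecMul_diagonal, htstar,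
    inv_diagonal_of_ne_zero_s16 hν, mulVec_diagonal, Pi.inv_apply]
  field_simp [hν i, hν j]

/-- Time-reversal identity for the terminating phase process: for all phases
`i, j` and times `s ≥ 0`, `α_i (e^{Ts})_{ij} t_j = α*_j (e^{T*s})_{ji} t*_i`. -/
theorem phase_reversal_identity {n : ℕ} (T : Matrix (Fin n) (Fin n) ℝ)
    (hT : IsUnit T)
    (hoff : ∀ i j, i ≠ j → 0 ≤ T i j)
    (hrow : ∀ i, ∑ j, T i j ≤ 0)
    (α : Fin n → ℝ) (hα : ∀ i, 0 ≤ α i) (hα1 : ∑ i, α i = 1)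
    (t : Fin n → ℝ) (ht : t = fun i => -(∑ j, T i j))
    (ν : Fin n → ℝ) (hν : ν = -(α ᵥ* T⁻¹)) (hνpos : ∀ i, 0 < ν i)
    (αstar : Fin n → ℝ) (hαstar : αstar = t ᵥ* Matrix.diagonal ν)
    (Tstar : Matrix (Fin n) (Fin n) ℝ)
    (hTstar : Tstar = (Matrix.diagonal ν)⁻¹ * Tᵀ * Matrix.diagonal ν)
    (tstar : Fin n → ℝ) (htstar : tstar = (Matrix.diagonal ν)⁻¹ *ᵥ α) :
    ∀ (i j : Fin n) (s : ℝ), 0 ≤ s →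
      α i * (NormedSpace.exp (s • T)) i j * t j =
        αstar j * (NormedSpace.exp (s • Tstar)) j i * tstar i :=
  phase_reversal_identity_general T α t ν hνpos αstar hαstar Tstar hTstar tstar htstar
end
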